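/- arXiv:2510.15229 — 5 statements merged into one kernel-verified Lean document; each statement's English description precedes it below -/
import Mathlib

section
/- Let F ⊆ ℝ^q be a nonempty compact convex set with 0 ∈ int F, and Ω ⊆ ℝ^q a nonempty convex set. For x̄ ∈ Ω, the convex subdifferential of ρ_F^Ω at x̄ equals N(x̄; Ω) ∩ {v : σ_F(v) ≤ 1}, where N(x̄; Ω) is the normal cone to Ω at x̄ and σ_F is the support function of F. -/
open scoped Pointwise

/-- Real-valued set-based Minkowski gauge. -/
noncomputable def rhoSR {q : ℕ} (F Ω : Set (EuclideanSpace ℝ (Fin q)))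
    (x : EuclideanSpace ℝ (Fin q)) : ℝ :=
  sInf {t : ℝ | 0 ≤ t ∧ x ∈ Ω + t • F}

/-- Convex subdifferential of a real-valued function at a point. -/
def subdiffAt {q : ℕ} (f : EuclideanSpace ℝ (Fin q) → ℝ)
    (x₀ : EuclideanSpace ℝ (Fin q)) : Set (EuclideanSpace ℝ (Fin q)) :=
  {v | ∀ x, (inner ℝ v (x - x₀) : ℝ) ≤ f x - f x₀}

/-- Normal cone to a convex set at a point. -/
def normalCone {q : ℕ} (Ω : Set (EuclideanSpace ℝ (Fin q)))
    (x₀ : EuclideanSpace ℝ (Fin q)) : Set (EuclideanSpace ℝ (Fin q)) :=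
  {v | ∀ x ∈ Ω, (inner ℝ v (x - x₀) : ℝ) ≤ 0}

/-- Support function of a set. -/
noncomputable def suppFn {q : ℕ} (F : Set (EuclideanSpace ℝ (Fin q)))
    (v : EuclideanSpace ℝ (Fin q)) : ℝ :=
  sSup ((fun f => (inner ℝ v f : ℝ)) '' F)

/-!
On `Ω` the gauge vanishes, so a subgradient at `x₀ ∈ Ω` is a normal vector to `Ω`; testing it
at `x₀ + f` with `f ∈ F`, where the gauge is at most `1`, gives `σ_F(v) ≤ 1`. Conversely, if
`x = ω + t f` with `ω ∈ Ω`, `f ∈ F`, `t ≥ 0`, then for such `v`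
`⟨v, x - x₀⟩ = ⟨v, ω - x₀⟩ + t ⟨v, f⟩ ≤ 0 + t σ_F(v) ≤ t`, and taking the infimum over all such
representations gives `⟨v, x - x₀⟩ ≤ ρ(x)`. Since `0 ∈ int F`, `F` is absorbent, so every `x`
has such a representation and the infimum is not the junk value of `sInf ∅`.
-/

section Gauge

variable {q : ℕ} {F Ω : Set (EuclideanSpace ℝ (Fin q))}

theorem rhoSR_le_of_mem {x : EuclideanSpace ℝ (Fin q)} {t : ℝ} (ht : 0 ≤ t)
    (hx : x ∈ Ω + t • F) : rhoSR F Ω x ≤ t :=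
  csInf_le ⟨0, fun _ hs => hs.1⟩ ⟨ht, hx⟩

theorem rhoSR_nonneg (x : EuclideanSpace ℝ (Fin q)) : 0 ≤ rhoSR F Ω x :=
  Real.sInf_nonneg fun _ hs => hs.1

theorem rhoSR_eq_zero_of_mem (hF : F.Nonempty) {x : EuclideanSpace ℝ (Fin q)} (hx : x ∈ Ω) :
    rhoSR F Ω x = 0 := by
  refine le_antisymm (rhoSR_le_of_mem le_rfl ?_) (rhoSR_nonneg x)
  rwa [Set.zero_smul_set hF, add_zero]

theorem exists_mem_add_smul_of_zero_mem_interior (h0 : (0 : EuclideanSpace ℝ (Fin q)) ∈ interior F)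
    {ω : EuclideanSpace ℝ (Fin q)} (hω : ω ∈ Ω) (x : EuclideanSpace ℝ (Fin q)) :
    ∃ t : ℝ, 0 ≤ t ∧ x ∈ Ω + t • F := by
  obtain ⟨r, hr, hrF⟩ :=
    (absorbent_nhds_zero (𝕜 := ℝ) (mem_interior_iff_mem_nhds.mp h0) (x - ω)).exists_pos
  refine ⟨r, hr.le, ω, hω, x - ω, hrF r (by rw [Real.norm_of_nonneg hr.le]) rfl, ?_⟩
  simp

theorem le_rhoSR (h0 : (0 : EuclideanSpace ℝ (Fin q)) ∈ interior F)
    {ω : EuclideanSpace ℝ (Fin q)} (hω : ω ∈ Ω) {x : EuclideanSpace ℝ (Fin q)} {c : ℝ}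
    (hc : ∀ t, 0 ≤ t → x ∈ Ω + t • F → c ≤ t) : c ≤ rhoSR F Ω x :=
  le_csInf (exists_mem_add_smul_of_zero_mem_interior h0 hω x) fun t ht => hc t ht.1 ht.2

end Gauge

section Support

variable {q : ℕ} {F : Set (EuclideanSpace ℝ (Fin q))}

theorem inner_le_suppFn (hF : IsCompact F) (v : EuclideanSpace ℝ (Fin q))
    {f : EuclideanSpace ℝ (Fin q)} (hf : f ∈ F) : inner ℝ v f ≤ suppFn F v :=
  le_csSup (hF.image (innerSL ℝ v).continuous).bddAbove ⟨f, hf, rfl⟩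

theorem suppFn_le (hF : F.Nonempty) {v : EuclideanSpace ℝ (Fin q)} {c : ℝ}
    (h : ∀ f ∈ F, inner ℝ v f ≤ c) : suppFn F v ≤ c :=
  csSup_le (hF.image _) (Set.forall_mem_image.mpr h)

end Support

section Subdifferential

variable {q : ℕ} {F Ω : Set (EuclideanSpace ℝ (Fin q))} {x₀ v : EuclideanSpace ℝ (Fin q)}

theorem mem_normalCone_of_mem_subdiffAt_rhoSR (hF : F.Nonempty) (hx₀ : x₀ ∈ Ω)
    (hv : v ∈ subdiffAt (rhoSR F Ω) x₀) : v ∈ normalCone Ω x₀ := fun x hx => by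
  simpa [rhoSR_eq_zero_of_mem hF hx, rhoSR_eq_zero_of_mem hF hx₀] using hv x

theorem suppFn_le_one_of_mem_subdiffAt_rhoSR (hF : F.Nonempty) (hx₀ : x₀ ∈ Ω)
    (hv : v ∈ subdiffAt (rhoSR F Ω) x₀) : suppFn F v ≤ 1 := by
  refine suppFn_le hF fun f hf => ?_
  have hle : rhoSR F Ω (x₀ + f) ≤ 1 :=
    rhoSR_le_of_mem zero_le_one (Set.add_mem_add hx₀ (by rwa [one_smul]))
  have hvf := hv (x₀ + f)
  rw [rhoSR_eq_zero_of_mem hF hx₀, sub_zero, add_sub_cancel_left] at hvf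
  exact hvf.trans hle

theorem mem_subdiffAt_rhoSR (hFcpt : IsCompact F)
    (h0 : (0 : EuclideanSpace ℝ (Fin q)) ∈ interior F) (hx₀ : x₀ ∈ Ω)
    (hN : v ∈ normalCone Ω x₀) (hσ : suppFn F v ≤ 1) : v ∈ subdiffAt (rhoSR F Ω) x₀ := by
  intro x
  rw [rhoSR_eq_zero_of_mem ⟨0, interior_subset h0⟩ hx₀, sub_zero]
  refine le_rhoSR h0 hx₀ ?_
  rintro t ht ⟨ω, hω, _, ⟨f, hf, rfl⟩, rfl⟩
  have hvf : inner ℝ v f ≤ (1 : ℝ) := (inner_le_suppFn hFcpt v hf).trans hσ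
  calc inner ℝ v (ω + t • f - x₀)
      = inner ℝ v (ω - x₀) + t * inner ℝ v f := by
        rw [add_sub_right_comm, inner_add_right, real_inner_smul_right]
    _ ≤ 0 + t * 1 := by gcongr; exact hN ω hω
    _ = t := by ring

end Subdifferential

theorem stmt3_general {q : ℕ} (F Ω : Set (EuclideanSpace ℝ (Fin q)))
    (hFcpt : IsCompact F)
    (h0 : (0 : EuclideanSpace ℝ (Fin q)) ∈ interior F)
    (x₀ : EuclideanSpace ℝ (Fin q)) (hx₀ : x₀ ∈ Ω) :
    subdiffAt (rhoSR F Ω) x₀ = normalCone Ω x₀ ∩ {v | suppFn F v ≤ 1} := by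
  have hF : F.Nonempty := ⟨0, interior_subset h0⟩
  ext v
  exact ⟨fun hv => ⟨mem_normalCone_of_mem_subdiffAt_rhoSR hF hx₀ hv,
      suppFn_le_one_of_mem_subdiffAt_rhoSR hF hx₀ hv⟩,
    fun ⟨hN, hσ⟩ => mem_subdiffAt_rhoSR hFcpt h0 hx₀ hN hσ⟩

theorem stmt3 {q : ℕ} (F Ω : Set (EuclideanSpace ℝ (Fin q)))
    (hFne : F.Nonempty) (hFcpt : IsCompact F) (hFconv : Convex ℝ F)
    (h0 : (0 : EuclideanSpace ℝ (Fin q)) ∈ interior F)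
    (hΩne : Ω.Nonempty) (hΩconv : Convex ℝ Ω)
    (x₀ : EuclideanSpace ℝ (Fin q)) (hx₀ : x₀ ∈ Ω) :
    subdiffAt (rhoSR F Ω) x₀ = normalCone Ω x₀ ∩ {v | suppFn F v ≤ 1} :=
  stmt3_general F Ω hFcpt h0 x₀ hx₀
end

section
/- Let F ⊆ ℝ^q be a nonempty compact convex set with 0 ∈ int F, Ω ⊆ ℝ^q a nonempty closed convex set, and x̄ a point with ρ_F^Ω(x̄) < ∞. If v ∈ ∂ρ_F^Ω(x̄) and ω̄ ∈ Ω satisfies ρ_F^Ω(x̄) = ρ_F(x̄ − ω̄), then v ∈ ∂ρ_F(x̄ − ω̄); i.e., ∂ρ_F^Ω(x̄) ⊆ ∂ρ_F(x̄ − ω̄) for any generalized projection point ω̄. -/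
open scoped Pointwise

/-- Real-valued Minkowski gauge. -/
noncomputable def rhoR {q : ℕ} (F : Set (EuclideanSpace ℝ (Fin q)))
    (y : EuclideanSpace ℝ (Fin q)) : ℝ :=
  sInf {t : ℝ | 0 ≤ t ∧ y ∈ t • F}

/-!
Translating by `ω̄ ∈ Ω` gives `ρ_F^Ω(x + ω̄) ≤ ρ_F(x)` for every `x`, with equality at
`x = x̄ - ω̄` by the choice of `ω̄`. So `x ↦ ρ_F(x - ω̄)` is a majorant of `ρ_F^Ω` touching it
at `x̄`, and every subgradient of a function at a point is a subgradient of any majorant touching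
it there.
-/

variable {q : ℕ}

theorem subdiffAt_subset_of_le_of_eq {f g : EuclideanSpace ℝ (Fin q) → ℝ}
    {x₀ ω : EuclideanSpace ℝ (Fin q)} (hle : ∀ x, g (x + ω) ≤ f x) (heq : g x₀ = f (x₀ - ω)) :
    subdiffAt g x₀ ⊆ subdiffAt f (x₀ - ω) := by
  intro v hv x
  calc inner ℝ v (x - (x₀ - ω)) = inner ℝ v (x + ω - x₀) := by congr 1; abel
    _ ≤ g (x + ω) - g x₀ := hv (x + ω)
    _ ≤ f x - f (x₀ - ω) := by rw [heq]; exact sub_le_sub_right (hle x) _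

theorem nonempty_gauge_set_of_zero_mem_interior {F : Set (EuclideanSpace ℝ (Fin q))}
    (hF : (0 : EuclideanSpace ℝ (Fin q)) ∈ interior F) (y : EuclideanSpace ℝ (Fin q)) :
    {t : ℝ | 0 ≤ t ∧ y ∈ t • F}.Nonempty :=
  let ⟨t, ht, hy⟩ := (absorbent_nhds_zero (mem_interior_iff_mem_nhds.1 hF)).gauge_set_nonempty
    (x := y)
  ⟨t, ht.le, hy⟩

theorem rhoSR_add_le_rhoR {F Ω : Set (EuclideanSpace ℝ (Fin q))}
    (hF : (0 : EuclideanSpace ℝ (Fin q)) ∈ interior F) {ω : EuclideanSpace ℝ (Fin q)}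
    (hω : ω ∈ Ω) (x : EuclideanSpace ℝ (Fin q)) :
    rhoSR F Ω (x + ω) ≤ rhoR F x := by
  refine csInf_le_csInf ⟨0, fun t ht => ht.1⟩ (nonempty_gauge_set_of_zero_mem_interior hF x) ?_
  rintro t ⟨ht, hx⟩
  exact ⟨ht, add_comm ω x ▸ Set.add_mem_add hω hx⟩

theorem stmt4_general {q : ℕ} (F Ω : Set (EuclideanSpace ℝ (Fin q)))
    (h0 : (0 : EuclideanSpace ℝ (Fin q)) ∈ interior F)
    (xb ωb v : EuclideanSpace ℝ (Fin q))
    (hωb : ωb ∈ Ω) (hproj : rhoSR F Ω xb = rhoR F (xb - ωb))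
    (hv : v ∈ subdiffAt (rhoSR F Ω) xb) :
    v ∈ subdiffAt (rhoR F) (xb - ωb) :=
  subdiffAt_subset_of_le_of_eq (rhoSR_add_le_rhoR h0 hωb) hproj hv

theorem stmt4 {q : ℕ} (F Ω : Set (EuclideanSpace ℝ (Fin q)))
    (hFne : F.Nonempty) (hFcpt : IsCompact F) (hFconv : Convex ℝ F)
    (h0 : (0 : EuclideanSpace ℝ (Fin q)) ∈ interior F)
    (hΩne : Ω.Nonempty) (hΩcl : IsClosed Ω) (hΩconv : Convex ℝ Ω)
    (xb ωb v : EuclideanSpace ℝ (Fin q))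
    (hfin : {t : ℝ | 0 ≤ t ∧ xb ∈ Ω + t • F}.Nonempty)
    (hωb : ωb ∈ Ω) (hproj : rhoSR F Ω xb = rhoR F (xb - ωb))
    (hv : v ∈ subdiffAt (rhoSR F Ω) xb) :
    v ∈ subdiffAt (rhoR F) (xb - ωb) :=
  stmt4_general F Ω h0 xb ωb v hωb hproj hv
end

section
/- Let F ⊆ ℝ^q be a nonempty compact strictly convex set with 0 ∈ int F, and Ω ⊆ ℝ^q a nonempty closed convex set. Then for every x ∈ ℝ^q, the generalized projection Π_F(x; Ω) = {ω ∈ Ω : ρ_F^Ω(x) = ρ_F(x − ω)} contains at most one point (hence is a singleton). -/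
open scoped Pointwise

lemma rhoR_eq_gauge {q : ℕ} (F : Set (EuclideanSpace ℝ (Fin q))) (hFne : F.Nonempty)
    (y : EuclideanSpace ℝ (Fin q)) : rhoR F y = gauge F y := by
  rcases eq_or_ne y 0 with rfl | hy
  · rw [gauge_zero, rhoR]
    apply le_antisymm
    · apply csInf_le ⟨0, fun t ht => ht.1⟩
      exact ⟨le_refl 0, by rw [Set.zero_smul_set hFne]; exact Set.mem_singleton 0⟩
    · exact le_csInf ⟨0, le_refl 0, by rw [Set.zero_smul_set hFne]; exact Set.mem_singleton 0⟩
        fun t ht => ht.1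
  · unfold rhoR gauge
    congr 1
    ext t
    simp only [Set.mem_setOf_eq]
    constructor
    · rintro ⟨ht, hmem⟩
      rcases ht.lt_or_eq with h | rfl
      · exact ⟨h, hmem⟩
      · rw [Set.zero_smul_set hFne] at hmem
        exact absurd hmem hy
    · rintro ⟨ht, hmem⟩
      exact ⟨ht.le, hmem⟩

lemma rhoSR_le {q : ℕ} (F Ω : Set (EuclideanSpace ℝ (Fin q))) (hFabs : Absorbent ℝ F)
    (x ω : EuclideanSpace ℝ (Fin q)) (hω : ω ∈ Ω) :
    rhoSR F Ω x ≤ rhoR F (x - ω) := by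
  apply csInf_le_csInf
  · exact ⟨0, fun t ht => ht.1⟩
  · obtain ⟨t, ht, hmem⟩ := (hFabs (x - ω)).exists_pos
    refine ⟨t, le_of_lt (by positivity), hmem t ?_ (Set.mem_singleton _)⟩
    rw [Real.norm_eq_abs]; exact le_abs_self t
  · rintro t ⟨ht, hmem⟩
    exact ⟨ht, ω, hω, x - ω, hmem, by module⟩

theorem stmt10 {q : ℕ} (F Ω : Set (EuclideanSpace ℝ (Fin q)))
    (hFne : F.Nonempty) (hFcpt : IsCompact F) (hFsconv : StrictConvex ℝ F)
    (h0 : (0 : EuclideanSpace ℝ (Fin q)) ∈ interior F)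
    (hΩne : Ω.Nonempty) (hΩcl : IsClosed Ω) (hΩconv : Convex ℝ Ω)
    (x : EuclideanSpace ℝ (Fin q)) :
    Set.Subsingleton {ω ∈ Ω | rhoSR F Ω x = rhoR F (x - ω)} := by
  have hFnhds : F ∈ nhds (0 : EuclideanSpace ℝ (Fin q)) :=
    mem_interior_iff_mem_nhds.mp h0
  have hFabs : Absorbent ℝ F := absorbent_nhds_zero hFnhds
  have hFconv : Convex ℝ F := hFsconv.convex
  have hFbdd : Bornology.IsVonNBounded ℝ F :=
    NormedSpace.isVonNBounded_of_isBounded _ hFcpt.isBounded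
  rintro ω₁ ⟨hω₁, he₁⟩ ω₂ ⟨hω₂, he₂⟩
  by_contra hne
  set r : ℝ := rhoSR F Ω x with hr
  rw [rhoR_eq_gauge F hFne] at he₁ he₂
  have hr0 : 0 ≤ r := he₁ ▸ gauge_nonneg _
  rcases hr0.lt_or_eq with hrpos | hrzero
  · -- r > 0 case
    have hu : (r⁻¹ • (x - ω₁)) ∈ F := by
      have : gauge F (r⁻¹ • (x - ω₁)) = 1 := by
        rw [gauge_smul_of_nonneg (by positivity), ← he₁, smul_eq_mul,
          inv_mul_cancel₀ (ne_of_gt hrpos)]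
      have hcl : r⁻¹ • (x - ω₁) ∈ closure F :=
        (gauge_le_one_iff_mem_closure hFconv hFnhds).mp this.le
      rwa [hFcpt.isClosed.closure_eq] at hcl
    have hv : (r⁻¹ • (x - ω₂)) ∈ F := by
      have : gauge F (r⁻¹ • (x - ω₂)) = 1 := by
        rw [gauge_smul_of_nonneg (by positivity), ← he₂, smul_eq_mul,
          inv_mul_cancel₀ (ne_of_gt hrpos)]
      have hcl : r⁻¹ • (x - ω₂) ∈ closure F :=
        (gauge_le_one_iff_mem_closure hFconv hFnhds).mp this.le
      rwa [hFcpt.isClosed.closure_eq] at hcl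
    have huv : r⁻¹ • (x - ω₁) ≠ r⁻¹ • (x - ω₂) := by
      intro h
      apply hne
      have h2 := smul_right_injective (EuclideanSpace ℝ (Fin q))
        (inv_ne_zero (ne_of_gt hrpos)) h
      have : ω₁ = ω₂ := by
        have := congrArg (fun z => x - z) h2
        simpa using this
      exact this
    have hmid : (1/2 : ℝ) • (r⁻¹ • (x - ω₁)) + (1/2 : ℝ) • (r⁻¹ • (x - ω₂)) ∈ interior F :=
      hFsconv hu hv huv (by norm_num) (by norm_num) (by norm_num)
    set ω : EuclideanSpace ℝ (Fin q) := (1/2 : ℝ) • ω₁ + (1/2 : ℝ) • ω₂ with hωdef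
    have hωΩ : ω ∈ Ω := hΩconv hω₁ hω₂ (by norm_num) (by norm_num) (by norm_num)
    have hmid' : r⁻¹ • (x - ω) ∈ interior F := by
      have : r⁻¹ • (x - ω) =
          (1/2 : ℝ) • (r⁻¹ • (x - ω₁)) + (1/2 : ℝ) • (r⁻¹ • (x - ω₂)) := by
        rw [hωdef]
        simp only [smul_smul, smul_sub, ← add_smul]
        module
      rw [this]
      exact hmid
    have hglt : gauge F (x - ω) < r := by
      have h1 : gauge F (r⁻¹ • (x - ω)) < 1 := interior_subset_gauge_lt_one F hmid'
      rw [gauge_smul_of_nonneg (by positivity), smul_eq_mul] at h1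
      calc gauge F (x - ω) = r * (r⁻¹ * gauge F (x - ω)) := by
            field_simp
        _ < r * 1 := by exact mul_lt_mul_of_pos_left h1 hrpos
        _ = r := mul_one r
    have := rhoSR_le F Ω hFabs x ω hωΩ
    rw [rhoR_eq_gauge F hFne] at this
    exact absurd (this.trans_lt hglt) (lt_irrefl r)
  · -- r = 0 case: both projections equal x
    apply hne
    have h1 : x - ω₁ = 0 := (gauge_eq_zero hFabs hFbdd).mp (hrzero ▸ he₁.symm)
    have h2 : x - ω₂ = 0 := (gauge_eq_zero hFabs hFbdd).mp (hrzero ▸ he₂.symm)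
    have : ω₁ = x := by rw [sub_eq_zero] at h1; exact h1.symm
    have : ω₂ = x := by rw [sub_eq_zero] at h2; exact h2.symm
    rw [sub_eq_zero] at h1 h2
    rw [← h1, ← h2]
end

section
/- Let F ⊆ ℝ^q be a nonempty closed convex set, Ω ⊆ ℝ^q nonempty, r > 0, and x a point with x ∉ Ω_r := {y : ρ_F^Ω(y) ≤ r} and ρ_F^Ω(x) < ∞. Then ρ_F^Ω(x) = ρ_F^{Ω_r}(x) + r. -/
open scoped Pointwise ENNReal

/-- Set-based Minkowski gauge with values in `[0, ∞]` (convention `inf ∅ = ∞`). -/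
noncomputable def rhoSE {q : ℕ} (F Ω : Set (EuclideanSpace ℝ (Fin q)))
    (x : EuclideanSpace ℝ (Fin q)) : ℝ≥0∞ :=
  sInf {c : ℝ≥0∞ | ∃ t : ℝ, 0 ≤ t ∧ c = ENNReal.ofReal t ∧ x ∈ Ω + t • F}

/-! Convexity of `F` gives `a • F + b • F = (a + b) • F` for `a, b ≥ 0`. Hence `ρ_Ω(y + z) ≤ ρ_Ω(y) + s`
for `z ∈ s • F`, which yields `ρ_Ω ≤ ρ_{Ω_r} + r`. Conversely, if `x ∈ Ω + t • F` then `t > r` because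
`x ∉ Ω_r`, and `x ∈ (Ω + r • F) + (t - r) • F ⊆ Ω_r + (t - r) • F`. -/

section

variable {q : ℕ} {F Ω : Set (EuclideanSpace ℝ (Fin q))} {x : EuclideanSpace ℝ (Fin q)}

lemma rhoSE_le_ofReal_of_mem {t : ℝ} (ht : 0 ≤ t) (hx : x ∈ Ω + t • F) :
    rhoSE F Ω x ≤ ENNReal.ofReal t :=
  sInf_le ⟨t, ht, rfl, hx⟩

lemma le_rhoSE_iff {a : ℝ≥0∞} :
    a ≤ rhoSE F Ω x ↔ ∀ t : ℝ, 0 ≤ t → x ∈ Ω + t • F → a ≤ ENNReal.ofReal t := by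
  simp only [rhoSE, le_sInf_iff, Set.mem_ofPred_eq]
  constructor
  · exact fun h t ht hx => h _ ⟨t, ht, rfl, hx⟩
  · rintro h _ ⟨t, ht, rfl, hx⟩
    exact h t ht hx

lemma rhoSE_add_le_of_mem_smul (hF : Convex ℝ F) (y : EuclideanSpace ℝ (Fin q))
    {z : EuclideanSpace ℝ (Fin q)} {s : ℝ} (hs : 0 ≤ s) (hz : z ∈ s • F) :
    rhoSE F Ω (y + z) ≤ rhoSE F Ω y + ENNReal.ofReal s := by
  rw [← tsub_le_iff_right, le_rhoSE_iff]
  intro t ht hy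
  have hyz : y + z ∈ Ω + (t + s) • F := by
    rw [hF.add_smul ht hs, ← add_assoc]
    exact Set.add_mem_add hy hz
  rw [tsub_le_iff_right, ← ENNReal.ofReal_add ht hs]
  exact rhoSE_le_ofReal_of_mem (add_nonneg ht hs) hyz

lemma rhoSE_le_rhoSE_sublevel_add (hF : Convex ℝ F) (r : ℝ) :
    rhoSE F Ω x ≤ rhoSE F {y | rhoSE F Ω y ≤ ENNReal.ofReal r} x + ENNReal.ofReal r := by
  rw [← tsub_le_iff_right, le_rhoSE_iff]
  rintro s hs hx
  obtain ⟨y, hy, z, hz, rfl⟩ := Set.mem_add.mp hx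
  rw [tsub_le_iff_right]
  calc rhoSE F Ω (y + z) ≤ rhoSE F Ω y + ENNReal.ofReal s := rhoSE_add_le_of_mem_smul hF y hs hz
    _ ≤ ENNReal.ofReal r + ENNReal.ofReal s := add_le_add_left hy _
    _ = ENNReal.ofReal s + ENNReal.ofReal r := add_comm _ _

lemma rhoSE_sublevel_add_le (hF : Convex ℝ F) {r : ℝ} (hr : 0 ≤ r)
    (hx : ENNReal.ofReal r < rhoSE F Ω x) :
    rhoSE F {y | rhoSE F Ω y ≤ ENNReal.ofReal r} x + ENNReal.ofReal r ≤ rhoSE F Ω x := by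
  rw [le_rhoSE_iff]
  intro t ht hxt
  have htr : 0 ≤ t - r := sub_nonneg.mpr
    (ENNReal.ofReal_lt_ofReal_iff'.mp (hx.trans_le (rhoSE_le_ofReal_of_mem ht hxt))).1.le
  have hsub : Ω + r • F ⊆ {y | rhoSE F Ω y ≤ ENNReal.ofReal r} :=
    fun y hy => rhoSE_le_ofReal_of_mem hr hy
  have hx' : x ∈ {y | rhoSE F Ω y ≤ ENNReal.ofReal r} + (t - r) • F := by
    refine Set.add_subset_add_right hsub ?_
    rwa [add_assoc, ← hF.add_smul hr htr, add_sub_cancel]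
  calc _ ≤ ENNReal.ofReal (t - r) + ENNReal.ofReal r := by
        gcongr; exact rhoSE_le_ofReal_of_mem htr hx'
    _ = ENNReal.ofReal t := by rw [← ENNReal.ofReal_add htr hr, sub_add_cancel]

end

theorem stmt13_general {q : ℕ} (F Ω : Set (EuclideanSpace ℝ (Fin q)))
    (hFconv : Convex ℝ F) (r : ℝ) (hr : 0 < r)
    (x : EuclideanSpace ℝ (Fin q))
    (hx : x ∉ {y | rhoSE F Ω y ≤ ENNReal.ofReal r}) :
    rhoSE F Ω x = rhoSE F {y | rhoSE F Ω y ≤ ENNReal.ofReal r} x + ENNReal.ofReal r :=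
  le_antisymm (rhoSE_le_rhoSE_sublevel_add hFconv r)
    (rhoSE_sublevel_add_le hFconv hr.le (not_le.mp hx))

theorem stmt13 {q : ℕ} (F Ω : Set (EuclideanSpace ℝ (Fin q)))
    (hFne : F.Nonempty) (hFcl : IsClosed F) (hFconv : Convex ℝ F)
    (h0 : (0 : EuclideanSpace ℝ (Fin q)) ∈ interior F)
    (hΩne : Ω.Nonempty) (r : ℝ) (hr : 0 < r)
    (x : EuclideanSpace ℝ (Fin q))
    (hx : x ∉ {y | rhoSE F Ω y ≤ ENNReal.ofReal r})
    (hfin : rhoSE F Ω x ≠ ⊤) :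
    rhoSE F Ω x = rhoSE F {y | rhoSE F Ω y ≤ ENNReal.ofReal r} x + ENNReal.ofReal r :=
  stmt13_general F Ω hFconv r hr x hx
end

section
/- Let F ⊆ ℝ^q be a compact strictly convex set with 0 ∈ int F, and Ω ⊆ ℝ^q a nonempty, closed, strictly convex set. Then ρ_F^Ω is not constant on any nondegenerate line segment [a, b] ⊆ ℝ^q with a ≠ b and [a, b] ∩ Ω = ∅. -/
open scoped Pointwise

private lemma S_bdd {q : ℕ} (F Ω : Set (EuclideanSpace ℝ (Fin q))) (x : EuclideanSpace ℝ (Fin q)) :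
    BddBelow {t : ℝ | 0 ≤ t ∧ x ∈ Ω + t • F} := ⟨0, fun _ ht => ht.1⟩

private lemma S_ne {q : ℕ} {F Ω : Set (EuclideanSpace ℝ (Fin q))}
    (h0 : (0 : EuclideanSpace ℝ (Fin q)) ∈ interior F) (hΩne : Ω.Nonempty)
    (x : EuclideanSpace ℝ (Fin q)) :
    {t : ℝ | 0 ≤ t ∧ x ∈ Ω + t • F}.Nonempty := by
  obtain ⟨ω, hω⟩ := hΩne
  obtain ⟨r, hr, hball⟩ := Metric.mem_nhds_iff.1 (mem_interior_iff_mem_nhds.1 h0)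
  set t : ℝ := ‖x - ω‖ / r + 1 with ht
  have ht0 : 0 < t := by positivity
  refine ⟨t, le_of_lt ht0, Set.mem_add.2 ⟨ω, hω, x - ω, ?_, by abel⟩⟩
  refine Set.mem_smul_set.2 ⟨t⁻¹ • (x - ω), hball ?_, smul_inv_smul₀ (ne_of_gt ht0) _⟩
  rw [Metric.mem_ball, dist_zero_right, norm_smul, norm_inv, Real.norm_eq_abs,
    abs_of_pos ht0]
  rw [inv_mul_lt_iff₀ ht0]
  have h2 : ‖x - ω‖ / r < t := by rw [ht]; linarith
  have h3 : ‖x - ω‖ = ‖x - ω‖ / r * r := (div_mul_cancel₀ _ hr.ne').symm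
  exact lt_of_le_of_lt (le_of_eq h3) (mul_lt_mul_of_pos_right h2 hr)

private lemma rho_mem {q : ℕ} {F Ω : Set (EuclideanSpace ℝ (Fin q))}
    (hFcpt : IsCompact F) (h0 : (0 : EuclideanSpace ℝ (Fin q)) ∈ interior F)
    (hΩcl : IsClosed Ω) (hΩne : Ω.Nonempty) (x : EuclideanSpace ℝ (Fin q)) :
    x ∈ Ω + (rhoSR F Ω x) • F := by
  set c := rhoSR F Ω x with hc
  have hne := S_ne h0 hΩne x
  have hbdd := S_bdd F Ω x
  -- closedness of Ω + c • F
  have hcl : IsClosed (Ω + c • F) := by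
    have h := hΩcl.vadd_left_of_isCompact (hFcpt.smul c)
    have he : (c • F) +ᵥ Ω = Ω + c • F := by
      ext y; simp only [Set.mem_vadd_set, Set.mem_add, vadd_eq_add]
      exact ⟨fun ⟨a, ha, b, hb, h⟩ => ⟨b, hb, a, ha, by rw [add_comm]; exact h⟩,
             fun ⟨b, hb, a, ha, h⟩ => ⟨a, ha, b, hb, by rw [add_comm]; exact h⟩⟩
    rwa [he] at h
  -- bound on F
  obtain ⟨M, hM⟩ := hFcpt.isBounded.exists_norm_le
  have hM0 : 0 ≤ M := le_trans (norm_nonneg _) (hM 0 (interior_subset h0))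
  rw [← hcl.closure_eq]
  rw [Metric.mem_closure_iff]
  intro ε hε
  have hlt : c < c + ε / (M + 1) := by
    have : 0 < ε / (M + 1) := by positivity
    linarith
  obtain ⟨t, ht, htlt⟩ := exists_lt_of_csInf_lt hne hlt
  have hct : c ≤ t := csInf_le hbdd ht
  obtain ⟨ω, hω, z, hz, hzx⟩ := Set.mem_add.1 ht.2
  obtain ⟨f, hf, rfl⟩ := Set.mem_smul_set.1 hz
  refine ⟨ω + c • f, Set.mem_add.2 ⟨ω, hω, c • f, Set.mem_smul_set.2 ⟨f, hf, rfl⟩, rfl⟩, ?_⟩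
  have : x = ω + t • f := hzx.symm
  rw [this, dist_eq_norm]
  have h1 : ω + t • f - (ω + c • f) = (t - c) • f := by
    rw [sub_smul]; abel
  rw [h1, norm_smul, Real.norm_eq_abs, abs_of_nonneg (by linarith)]
  calc (t - c) * ‖f‖ ≤ (t - c) * (M + 1) := by
        apply mul_le_mul_of_nonneg_left (by linarith [hM f hf]) (by linarith)
    _ < (ε / (M + 1)) * (M + 1) := by
        apply mul_lt_mul_of_pos_right (by linarith) (by linarith)
    _ = ε := div_mul_cancel₀ _ (by linarith)

private lemma rho_nonneg {q : ℕ} {F Ω : Set (EuclideanSpace ℝ (Fin q))}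
    (h0 : (0 : EuclideanSpace ℝ (Fin q)) ∈ interior F) (hΩne : Ω.Nonempty)
    (x : EuclideanSpace ℝ (Fin q)) : 0 ≤ rhoSR F Ω x :=
  le_csInf (S_ne h0 hΩne x) fun _ ht => ht.1

set_option maxHeartbeats 1000000 in
theorem stmt19 {q : ℕ} (F Ω : Set (EuclideanSpace ℝ (Fin q)))
    (hFne : F.Nonempty) (hFcpt : IsCompact F) (hFsconv : StrictConvex ℝ F)
    (h0 : (0 : EuclideanSpace ℝ (Fin q)) ∈ interior F)
    (hΩne : Ω.Nonempty) (hΩcl : IsClosed Ω) (hΩsconv : StrictConvex ℝ Ω)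
    (a b : EuclideanSpace ℝ (Fin q)) (hab : a ≠ b)
    (hseg : segment ℝ a b ∩ Ω = ∅) :
    ¬ ∃ c : ℝ, ∀ x ∈ segment ℝ a b, rhoSR F Ω x = c := by
  rintro ⟨c, hc⟩
  have hΩconv := hΩsconv.convex
  have hdisj : ∀ x ∈ segment ℝ a b, x ∉ Ω := fun x hx hxΩ =>
    Set.eq_empty_iff_forall_notMem.1 hseg x ⟨hx, hxΩ⟩
  have ha : rhoSR F Ω a = c := hc a (left_mem_segment ℝ a b)
  have hb : rhoSR F Ω b = c := hc b (right_mem_segment ℝ a b)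
  set m : EuclideanSpace ℝ (Fin q) := (1/2 : ℝ) • a + (1/2 : ℝ) • b with hm
  have hmseg : m ∈ segment ℝ a b := ⟨1/2, 1/2, by norm_num, by norm_num, by norm_num, rfl⟩
  have hmρ : rhoSR F Ω m = c := hc m hmseg
  have haa := rho_mem hFcpt h0 hΩcl hΩne a
  rw [ha] at haa
  have hbb := rho_mem hFcpt h0 hΩcl hΩne b
  rw [hb] at hbb
  have hc0 : 0 ≤ c := ha ▸ rho_nonneg h0 hΩne a
  have hcpos : 0 < c := by
    rcases hc0.lt_or_eq with h | h
    · exact h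
    · exfalso
      rw [← h, Set.zero_smul_set hFne] at haa
      exact hdisj a (left_mem_segment ℝ a b) (by simpa using haa)
  obtain ⟨ωa, hωa, za, hza, hza'⟩ := Set.mem_add.1 haa
  obtain ⟨fa, hfa, rfl⟩ := Set.mem_smul_set.1 hza
  obtain ⟨ωb, hωb, zb, hzb, hzb'⟩ := Set.mem_add.1 hbb
  obtain ⟨fb, hfb, rfl⟩ := Set.mem_smul_set.1 hzb
  have key : ∀ t : ℝ, 0 ≤ t → t < c → m ∈ Ω + t • F → False := by
    intro t h1 h2 h3
    have : c ≤ t := hmρ ▸ csInf_le (S_bdd F Ω m) ⟨h1, h3⟩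
    linarith
  set w : EuclideanSpace ℝ (Fin q) := (1/2 : ℝ) • ωa + (1/2 : ℝ) • ωb with hw
  set g : EuclideanSpace ℝ (Fin q) := (1/2 : ℝ) • fa + (1/2 : ℝ) • fb with hg
  have hmid : m = w + c • g := by
    rw [hm, hw, hg, ← hza', ← hzb']
    module
  by_cases hfab : fa = fb
  · -- projections to F coincide; ω's distinct, use interior of Ω
    have hωab : ωa ≠ ωb := by
      intro h; apply hab; rw [← hza', ← hzb', h, hfab]
    have hint : w ∈ interior Ω :=
      hΩsconv hωa hωb hωab (by norm_num : (0:ℝ) < 1/2) (by norm_num : (0:ℝ) < 1/2)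
        (by norm_num)
    obtain ⟨ε, hε, hball⟩ := Metric.mem_nhds_iff.1 (mem_interior_iff_mem_nhds.1 hint)
    have hgfa : g = fa := by rw [hg, hfab]; module
    set δ : ℝ := min 1 (ε / (2 * (c * ‖fa‖ + 1))) with hδ
    have hδpos : 0 < δ := lt_min one_pos (by positivity)
    have hδ1 : δ ≤ 1 := min_le_left _ _
    have hδ2 : δ ≤ ε / (2 * (c * ‖fa‖ + 1)) := min_le_right _ _
    have hw' : w + (δ * c) • fa ∈ Ω := by
      apply hball
      rw [Metric.mem_ball, dist_eq_norm]
      have : w + (δ * c) • fa - w = (δ * c) • fa := by abel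
      rw [this, norm_smul, Real.norm_eq_abs, abs_of_nonneg (by positivity)]
      have h1 : 0 ≤ c * ‖fa‖ := by positivity
      have h2 : δ * (2 * (c * ‖fa‖ + 1)) ≤ ε := by
        rw [← le_div_iff₀ (by positivity)]; exact hδ2
      nlinarith
    refine key ((1 - δ) * c) (by nlinarith) (by nlinarith) ?_
    refine Set.mem_add.2 ⟨w + (δ * c) • fa, hw', ((1 - δ) * c) • fa,
      Set.mem_smul_set.2 ⟨fa, hfa, rfl⟩, ?_⟩
    rw [hmid, hgfa]
    module
  · -- projections distinct; use interior of F
    have hgF : g ∈ interior F :=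
      hFsconv hfa hfb hfab (by norm_num : (0:ℝ) < 1/2) (by norm_num : (0:ℝ) < 1/2)
        (by norm_num)
    have hwΩ : w ∈ Ω := hΩconv hωa hωb (by norm_num) (by norm_num) (by norm_num)
    by_cases hg0 : g = 0
    · exact hdisj m hmseg (by rw [hmid, hg0, smul_zero, add_zero]; exact hwΩ)
    · obtain ⟨ε, hε, hball⟩ := Metric.mem_nhds_iff.1 (mem_interior_iff_mem_nhds.1 hgF)
      have hgn : 0 < ‖g‖ := norm_pos_iff.2 hg0
      have h2g : (0:ℝ) < 2 * ‖g‖ := by linarith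
      set s : ℝ := 1 + ε / (2 * ‖g‖) with hs
      have hs1 : 1 < s := by
        have : 0 < ε / (2 * ‖g‖) := div_pos hε h2g
        rw [hs]; linarith
      have hsF : s • g ∈ F := by
        apply hball
        rw [Metric.mem_ball, dist_eq_norm]
        have : s • g - g = (s - 1) • g := by rw [sub_smul, one_smul]
        rw [this, norm_smul, Real.norm_eq_abs, abs_of_nonneg (by linarith)]
        rw [hs]
        have : (1 + ε / (2 * ‖g‖) - 1) * ‖g‖ = ε / 2 := by
          field_simp
          ring
        rw [this]; linarith
      refine key (c / s) (by positivity) (div_lt_self hcpos hs1) ?_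
      refine Set.mem_add.2 ⟨w, hwΩ, (c / s) • (s • g),
        Set.mem_smul_set.2 ⟨s • g, hsF, rfl⟩, ?_⟩
      rw [smul_smul, div_mul_cancel₀ _ (by linarith : s ≠ 0), hmid]
end
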